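/- arXiv:1503.08933 — 2 statements merged into one kernel-verified Lean document; each statement's English description precedes it below -/
import Mathlib

section
/- Let d ≥ 1 and let (γ_u)_{u⊆[d]} be strictly positive weights. Then for every C^∞ function f : ℝ^d → ℂ one has ‖f‖_{A,d,∞} ≤ C_{d,∞} · ‖f‖_{⊤,d,∞}, where C_{d,∞} = max_{u⊆[d]} ∑_{v⊆[d]∖u} 2^{−|v|} γ_{u∪v}/γ_u. -/
open MeasureTheory

/-- Partial derivative in direction `j`. -/
noncomputable def pderiv {d : ℕ} (j : Fin d) (f : (Fin d → ℝ) → ℂ) : (Fin d → ℝ) → ℂ :=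
  fun x => fderiv ℝ f x (Pi.single j 1)

/-- First-order mixed partial derivative `f^{(u)} = (∏_{j∈u} ∂/∂x_j) f`. -/
noncomputable def mderiv {d : ℕ} (u : Finset (Fin d)) (f : (Fin d → ℝ) → ℂ) : (Fin d → ℝ) → ℂ :=
  u.toList.foldr pderiv f

/-- The unit cube `[0,1]^d`. -/
def cube (d : ℕ) : Set (Fin d → ℝ) := Set.univ.pi fun _ => Set.Icc 0 1

/-- The point `(x_u; t_{u^c})`: `j`-th coordinate is `x j` for `j ∈ u` and `t j` otherwise. -/
def combine {d : ℕ} (u : Finset (Fin d)) (x t : Fin d → ℝ) : Fin d → ℝ :=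
  fun j => if j ∈ u then x j else t j

/-- The anchored norm with `p = ∞`:
`‖f‖_{⊤,d,∞} = max_{u⊆[d]} γ_u⁻¹ sup_{x∈[0,1]^d} |f^{(u)}(x_u;0)|`. -/
noncomputable def anchNormInf {d : ℕ} (γ : Finset (Fin d) → ℝ) (f : (Fin d → ℝ) → ℂ) : ℝ :=
  ⨆ u : Finset (Fin d), (γ u)⁻¹ * ⨆ x : cube d, ‖mderiv u f (combine u x.1 0)‖

/-- The ANOVA norm with `p = ∞`:
`‖f‖_{A,d,∞} = max_{u⊆[d]} γ_u⁻¹ sup_{x∈[0,1]^d} |∫_{[0,1]^{[d]∖u}} f^{(u)}(x_u;t) dt|`. -/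
noncomputable def anovaNormInf {d : ℕ} (γ : Finset (Fin d) → ℝ) (f : (Fin d → ℝ) → ℂ) : ℝ :=
  ⨆ u : Finset (Fin d), (γ u)⁻¹ *
    ⨆ x : cube d, ‖∫ t in cube d, mderiv u f (combine u x.1 t)‖

/-- `C_{d,∞} = max_{u⊆[d]} ∑_{v⊆u^c} 2^{-|v|} γ_{u∪v}/γ_u`. -/
noncomputable def Cinf {d : ℕ} (γ : Finset (Fin d) → ℝ) : ℝ :=
  ⨆ u : Finset (Fin d), ∑ v ∈ uᶜ.powerset, (2 : ℝ)⁻¹ ^ v.card * (γ (u ∪ v) / γ u)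


open Set

noncomputable def nu : Measure ℝ := volume.restrict (Set.Icc 0 1)
noncomputable def mucube (d : ℕ) : Measure (Fin d → ℝ) := Measure.pi fun _ => nu

variable {d : ℕ}

lemma contDiff_pderiv {f : (Fin d → ℝ) → ℂ} (hf : ContDiff ℝ (⊤ : ℕ∞) f) (j : Fin d) :
    ContDiff ℝ (⊤ : ℕ∞) (pderiv j f) := by
  have h1 : ContDiff ℝ (⊤ : ℕ∞) (fderiv ℝ f) := hf.fderiv_right (by simp)
  exact (ContinuousLinearMap.apply ℝ ℂ (Pi.single j 1)).contDiff.comp h1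

lemma pderiv_pderiv {g : (Fin d → ℝ) → ℂ} (hg : ContDiff ℝ (⊤ : ℕ∞) g) (i j : Fin d) (x : Fin d → ℝ) :
    pderiv i (pderiv j g) x = fderiv ℝ (fderiv ℝ g) x (Pi.single i 1) (Pi.single j 1) := by
  have hdiff : DifferentiableAt ℝ (fderiv ℝ g) x :=
    ((hg.fderiv_right (m := 1) (WithTop.coe_le_coe.2 le_top)).differentiable one_ne_zero).differentiableAt
  have : pderiv j g = (ContinuousLinearMap.apply ℝ ℂ (Pi.single j 1)) ∘ (fderiv ℝ g) := rfl
  rw [pderiv, this, fderiv_comp x (ContinuousLinearMap.apply ℝ ℂ (Pi.single j 1)).differentiableAt hdiff]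
  simp [ContinuousLinearMap.fderiv]

lemma pderiv_comm {g : (Fin d → ℝ) → ℂ} (hg : ContDiff ℝ (⊤ : ℕ∞) g) (i j : Fin d) :
    pderiv i (pderiv j g) = pderiv j (pderiv i g) := by
  funext x
  have hsymm : IsSymmSndFDerivAt ℝ g x := (hg.contDiffAt).isSymmSndFDerivAt (by rw [minSmoothness_of_isRCLikeNormedField]; exact WithTop.coe_le_coe.2 le_top)
  rw [pderiv_pderiv hg i j, pderiv_pderiv hg j i, hsymm]


lemma contDiff_foldr {f : (Fin d → ℝ) → ℂ} (hf : ContDiff ℝ (⊤ : ℕ∞) f) (l : List (Fin d)) :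
    ContDiff ℝ (⊤ : ℕ∞) (l.foldr pderiv f) := by
  induction l with
  | nil => exact hf
  | cons j l ih => exact contDiff_pderiv ih j

lemma contDiff_mderiv {f : (Fin d → ℝ) → ℂ} (hf : ContDiff ℝ (⊤ : ℕ∞) f) (u : Finset (Fin d)) :
    ContDiff ℝ (⊤ : ℕ∞) (mderiv u f) := contDiff_foldr hf _

lemma foldr_perm {f : (Fin d → ℝ) → ℂ} (hf : ContDiff ℝ (⊤ : ℕ∞) f) {l₁ l₂ : List (Fin d)}
    (h : l₁.Perm l₂) : l₁.foldr pderiv f = l₂.foldr pderiv f := by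
  induction h with
  | nil => rfl
  | cons j _ ih => simp only [List.foldr_cons, ih]
  | swap i j l => exact pderiv_comm (contDiff_foldr hf l) j i
  | trans _ _ ih1 ih2 => rw [ih1, ih2]

lemma mderiv_insert {f : (Fin d → ℝ) → ℂ} (hf : ContDiff ℝ (⊤ : ℕ∞) f) {u : Finset (Fin d)}
    {j : Fin d} (hj : j ∉ u) : mderiv (insert j u) f = pderiv j (mderiv u f) := by
  rw [mderiv, foldr_perm hf (Finset.toList_insert hj)]; rfl


instance : IsProbabilityMeasure nu := by
  constructor; rw [nu, Measure.restrict_apply MeasurableSet.univ, Set.univ_inter,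
    Real.volume_Icc]; norm_num

instance : IsProbabilityMeasure (mucube d) := by
  rw [mucube]; infer_instance

instance : SigmaFinite nu := by rw [nu]; infer_instance

lemma measurable_update_pair' (j : Fin d) :
    Measurable (fun p : (Fin d → ℝ) × ℝ => Function.update p.1 j p.2) := by
  refine measurable_pi_lambda _ fun i => ?_
  by_cases h : i = j
  · subst h; simpa using measurable_snd
  · have hm : Measurable fun c : (Fin d → ℝ) × ℝ => c.1 i :=
      (measurable_pi_apply i).comp measurable_fst
    simpa [Function.update_apply, h] using hm

lemma mucube_eq : mucube d = volume.restrict (cube d) := by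
  refine (Measure.pi_eq fun s hs => ?_)
  rw [Measure.restrict_apply (MeasurableSet.univ_pi hs), cube,
    ← Set.pi_inter_distrib, volume_pi_pi]
  simp only [nu, Measure.restrict_apply' measurableSet_Icc]

lemma map_update (j : Fin d) :
    ((mucube d).prod nu).map (fun p : (Fin d → ℝ) × ℝ => Function.update p.1 j p.2)
      = mucube d := by
  refine (Measure.pi_eq fun s hs => ?_).symm
  have hm := measurable_update_pair' j
  rw [Measure.map_apply hm (MeasurableSet.univ_pi hs)]
  have hpre : (fun p : (Fin d → ℝ) × ℝ => Function.update p.1 j p.2) ⁻¹' (Set.univ.pi s)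
      = (Set.univ.pi fun i => if i = j then Set.univ else s i) ×ˢ (s j) := by
    ext ⟨t, y⟩
    simp only [Set.mem_preimage, Set.mem_pi, Set.mem_univ, forall_true_left, Set.mem_prod]
    constructor
    · intro h
      refine ⟨fun i => ?_, by simpa using h j⟩
      by_cases hij : i = j
      · simp [hij]
      · simpa [Function.update_apply, hij] using h i
    · rintro ⟨h1, h2⟩ i
      by_cases hij : i = j
      · subst hij; simpa using h2
      · simpa [Function.update_apply, hij] using h1 i
  rw [hpre, Measure.prod_prod, mucube, Measure.pi_pi]
  rw [← Finset.mul_prod_erase Finset.univ _ (Finset.mem_univ j),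
    ← Finset.mul_prod_erase Finset.univ (fun i => nu (s i)) (Finset.mem_univ j)]
  have h1 : nu (if j = j then univ else s j) = nu univ := by simp
  rw [h1, measure_univ, one_mul, mul_comm]
  exact congrArg _ (Finset.prod_congr rfl fun i hi => by
    rw [if_neg (Finset.mem_erase.1 hi).1])


lemma isCompact_cube : IsCompact (cube d) := isCompact_univ_pi fun _ => isCompact_Icc

lemma integrable_mucube {E : Type*} [NormedAddCommGroup E] [NormedSpace ℝ E]
    {F : (Fin d → ℝ) → E} (hF : Continuous F) : Integrable F (mucube d) := by
  rw [mucube_eq]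
  exact hF.continuousOn.integrableOn_compact isCompact_cube

lemma integrable_prodMu {E : Type*} [NormedAddCommGroup E] [NormedSpace ℝ E]
    {F : (Fin d → ℝ) × ℝ → E} (hF : Continuous F) :
    Integrable F ((mucube d).prod nu) := by
  rw [mucube_eq, nu, Measure.prod_restrict]
  exact hF.continuousOn.integrableOn_compact (isCompact_cube.prod isCompact_Icc)

lemma continuous_update_pair (j : Fin d) :
    Continuous (fun p : (Fin d → ℝ) × ℝ => Function.update p.1 j p.2) := by
  refine continuous_pi fun i => ?_
  rcases eq_or_ne i j with h | h
  · subst h; simpa using continuous_snd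
  · have hm : Continuous fun c : (Fin d → ℝ) × ℝ => c.1 i :=
      (continuous_apply i).comp continuous_fst
    simpa [Function.update_apply, h] using hm

lemma continuous_update_right (c : Fin d → ℝ) (j : Fin d) :
    Continuous (fun s : ℝ => Function.update c j s) := by
  refine continuous_pi fun i => ?_
  rcases eq_or_ne i j with h | h
  · subst h; simpa using continuous_id'
  · simpa [Function.update_apply, h] using continuous_const

lemma peel (j : Fin d) {φ : (Fin d → ℝ) → ℂ} (hφ : Continuous φ) :
    ∫ t, φ t ∂(mucube d) = ∫ t, ∫ s, φ (Function.update t j s) ∂nu ∂(mucube d) := by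
  conv_lhs => rw [← map_update j]
  rw [integral_map (measurable_update_pair' j).aemeasurable hφ.aestronglyMeasurable]
  exact integral_prod _ (integrable_prodMu (hφ.comp (continuous_update_pair j)))

lemma hasDerivAt_comp_update {g : (Fin d → ℝ) → ℂ} (hg : ContDiff ℝ (⊤ : ℕ∞) g)
    (c : Fin d → ℝ) (j : Fin d) (s : ℝ) :
    HasDerivAt (fun s => g (Function.update c j s)) (pderiv j g (Function.update c j s)) s :=
  ((hg.differentiable (by simp) (Function.update c j s)).hasFDerivAt).comp_hasDerivAt s
    (hasDerivAt_update c j s)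

lemma nu_integral_eq (F : ℝ → ℂ) : ∫ s, F s ∂nu = ∫ s in (0:ℝ)..1, F s := by
  rw [nu, intervalIntegral.integral_of_le zero_le_one, integral_Icc_eq_integral_Ioc]

lemma oneDim {g : (Fin d → ℝ) → ℂ} (hg : ContDiff ℝ (⊤ : ℕ∞) g) (c : Fin d → ℝ) (j : Fin d) :
    ∫ s, g (Function.update c j s) ∂nu
      = g (Function.update c j 0)
        + ∫ s, ((1 : ℝ) - s) • pderiv j g (Function.update c j s) ∂nu := by
  have hcont_h : Continuous fun s => g (Function.update c j s) :=
    (hg.continuous).comp (continuous_update_right c j)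
  have hcont_h' : Continuous fun s => pderiv j g (Function.update c j s) :=
    ((contDiff_pderiv hg j).continuous).comp (continuous_update_right c j)
  rw [nu_integral_eq, nu_integral_eq]
  have key : ∫ s in (0:ℝ)..1,
      (g (Function.update c j s) + (s - 1) • pderiv j g (Function.update c j s))
      = g (Function.update c j 0) := by
    have hΨ : ∀ s ∈ Set.uIcc (0:ℝ) 1, HasDerivAt
        (fun s => (s - 1) • g (Function.update c j s))
        (g (Function.update c j s) + (s - 1) • pderiv j g (Function.update c j s)) s := by
      intro s _
      have h1 : HasDerivAt (fun s : ℝ => s - 1) 1 s := (hasDerivAt_id s).sub_const 1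
      have := h1.smul (hasDerivAt_comp_update hg c j s)
      rw [one_smul, add_comm] at this; exact this
    rw [intervalIntegral.integral_eq_sub_of_hasDerivAt hΨ
      ((hcont_h.add ((continuous_id.sub continuous_const).smul hcont_h' :
        Continuous fun s : ℝ => (s - 1) • pderiv j g (Function.update c j s))).intervalIntegrable
        (μ := volume) 0 1)]
    simp
  have hc2 : Continuous fun s : ℝ => (s - 1) • pderiv j g (Function.update c j s) :=
    (continuous_id.sub continuous_const).smul hcont_h'
  have hsplit : ∫ s in (0:ℝ)..1,
      (g (Function.update c j s) + (s - 1) • pderiv j g (Function.update c j s))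
      = (∫ s in (0:ℝ)..1, g (Function.update c j s))
        + ∫ s in (0:ℝ)..1, (s - 1) • pderiv j g (Function.update c j s) :=
    intervalIntegral.integral_add (hcont_h.intervalIntegrable (μ := volume) (0:ℝ) 1)
      (hc2.intervalIntegrable (μ := volume) (0:ℝ) 1)
  rw [hsplit] at key
  have : ∫ s in (0:ℝ)..1, ((1:ℝ) - s) • pderiv j g (Function.update c j s)
      = - ∫ s in (0:ℝ)..1, (s - 1) • pderiv j g (Function.update c j s) := by
    rw [← intervalIntegral.integral_neg]
    congr 1; funext s; rw [← neg_smul]; ring_nf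
  rw [this]
  linear_combination key


-- cube basics
lemma mem_cube {y : Fin d → ℝ} : y ∈ cube d ↔ ∀ j, y j ∈ Set.Icc (0:ℝ) 1 := by
  rw [cube, Set.mem_univ_pi]

lemma zero_mem_cube : (0 : Fin d → ℝ) ∈ cube d := by
  simp [mem_cube, Set.mem_Icc, le_refl, zero_le_one]

instance : Nonempty (cube d) := ⟨⟨0, zero_mem_cube⟩⟩

lemma combine_mem_cube {u : Finset (Fin d)} {x t : Fin d → ℝ} (hx : x ∈ cube d)
    (ht : t ∈ cube d) : combine u x t ∈ cube d := by
  rw [mem_cube] at *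
  intro j
  rw [combine]
  split_ifs
  · exact hx j
  · exact ht j

lemma continuous_combine_right (u w : Finset (Fin d)) (x z : Fin d → ℝ) :
    Continuous (fun t => combine u x (combine w t z)) := by
  refine continuous_pi fun i => ?_
  simp only [combine]
  split_ifs
  · exact continuous_const
  · exact continuous_apply i
  · exact continuous_const

-- sup quantities
noncomputable def Tsup (f : (Fin d → ℝ) → ℂ) (u : Finset (Fin d)) : ℝ :=
  ⨆ x : cube d, ‖mderiv u f (combine u x.1 0)‖

noncomputable def Bsup (f : (Fin d → ℝ) → ℂ) (u w : Finset (Fin d)) : ℝ :=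
  ⨆ x : cube d, ‖∫ t, mderiv u f (combine u x.1 (combine w t 0)) ∂(mucube d)‖

lemma bddAbove_of_le {α : Type*} [Nonempty α] {F : α → ℝ} {M : ℝ} (h : ∀ a, F a ≤ M) :
    BddAbove (Set.range F) := ⟨M, by rintro _ ⟨a, rfl⟩; exact h a⟩

lemma ae_mem_cube : ∀ᵐ t ∂(mucube d), t ∈ cube d := by
  rw [mucube_eq]
  exact ae_restrict_mem isCompact_cube.measurableSet

lemma ae_mem_nu : ∀ᵐ s ∂nu, s ∈ Set.Icc (0:ℝ) 1 := ae_restrict_mem measurableSet_Icc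

lemma exists_bound (f : (Fin d → ℝ) → ℂ) (hf : Continuous f) :
    ∃ M : ℝ, 0 ≤ M ∧ ∀ y ∈ cube d, ‖f y‖ ≤ M := by
  obtain ⟨M, hM⟩ := isCompact_cube.exists_bound_of_continuousOn hf.continuousOn
  exact ⟨max M 0, le_max_right _ _, fun y hy => (hM y hy).trans (le_max_left _ _)⟩

lemma bddAbove_Tsup {f : (Fin d → ℝ) → ℂ} (hf : ContDiff ℝ (⊤ : ℕ∞) f) (u : Finset (Fin d)) :
    BddAbove (Set.range fun x : cube d => ‖mderiv u f (combine u x.1 0)‖) := by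
  obtain ⟨M, _, hM⟩ := exists_bound (mderiv u f) (contDiff_mderiv hf u).continuous
  exact bddAbove_of_le fun x => hM _ (combine_mem_cube x.2 zero_mem_cube)

lemma norm_integral_le_bound {f : (Fin d → ℝ) → ℂ} {u w : Finset (Fin d)} {M : ℝ}
    (hM : ∀ y ∈ cube d, ‖mderiv u f y‖ ≤ M) (x : cube d) :
    ‖∫ t, mderiv u f (combine u x.1 (combine w t 0)) ∂(mucube d)‖ ≤ M := by
  have h := norm_integral_le_of_norm_le_const (μ := mucube d)
    (f := fun t => mderiv u f (combine u x.1 (combine w t 0))) (C := M) ?_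
  · simpa using h
  · filter_upwards [ae_mem_cube] with t ht
    exact hM _ (combine_mem_cube x.2 (combine_mem_cube ht zero_mem_cube))

lemma bddAbove_Bsup {f : (Fin d → ℝ) → ℂ} (hf : ContDiff ℝ (⊤ : ℕ∞) f) (u w : Finset (Fin d)) :
    BddAbove (Set.range fun x : cube d =>
      ‖∫ t, mderiv u f (combine u x.1 (combine w t 0)) ∂(mucube d)‖) := by
  obtain ⟨M, hM0, hM⟩ := exists_bound (mderiv u f) (contDiff_mderiv hf u).continuous
  exact bddAbove_of_le fun x => norm_integral_le_bound hM x

lemma integrable_nu {E : Type*} [NormedAddCommGroup E] [NormedSpace ℝ E] {F : ℝ → E}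
    (hF : Continuous F) : Integrable F nu := by
  rw [nu]
  exact hF.continuousOn.integrableOn_compact isCompact_Icc

lemma step {f : (Fin d → ℝ) → ℂ} (hf : ContDiff ℝ (⊤ : ℕ∞) f) {u w : Finset (Fin d)} {j : Fin d}
    (hju : j ∉ u) (hjw : j ∉ w) :
    Bsup f u (insert j w) ≤ Bsup f u w + 2⁻¹ * Bsup f (insert j u) w := by
  set g := mderiv u f with hg_def
  have hg : ContDiff ℝ (⊤ : ℕ∞) g := contDiff_mderiv hf u
  have hg' : ContDiff ℝ (⊤ : ℕ∞) (pderiv j g) := contDiff_pderiv hg j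
  refine ciSup_le fun x => ?_
  set P : (Fin d → ℝ) → (Fin d → ℝ) := fun t => combine u x.1 (combine (insert j w) t 0) with hP
  set Q : (Fin d → ℝ) → (Fin d → ℝ) := fun t => combine u x.1 (combine w t 0) with hQ
  have hPQ : ∀ t s, P (Function.update t j s) = Function.update (Q t) j s := by
    intro t s; funext i
    rcases eq_or_ne i j with h | h
    · subst h
      simp [P, Q, combine, Function.update_self, hju, Finset.mem_insert]
    · simp [P, Q, combine, Function.update_of_ne h, Finset.mem_insert, h]
  have hQ0 : ∀ t, Function.update (Q t) j 0 = Q t := by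
    intro t; funext i
    rcases eq_or_ne i j with h | h
    · subst h; simp [Q, combine, hju, hjw]
    · simp [Function.update_of_ne h]
  have hQup : ∀ t s, Function.update (Q t) j s
      = combine (insert j u) (Function.update x.1 j s) (combine w t 0) := by
    intro t s; funext i
    rcases eq_or_ne i j with h | h
    · subst h; simp [Q, combine, Finset.mem_insert]
    · simp [Q, combine, Function.update_of_ne h, Finset.mem_insert, h]
  have hPcont : Continuous P := continuous_combine_right _ _ _ _
  have hQcont : Continuous Q := continuous_combine_right _ _ _ _
  -- the parametrized inner function
  set ρ : (Fin d → ℝ) × ℝ → ℂ :=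
    fun p => ((1:ℝ) - p.2) • pderiv j g (Function.update (Q p.1) j p.2) with hρ
  have hρcont : Continuous ρ := by
    apply Continuous.fun_smul
    · exact continuous_const.sub continuous_snd
    · exact hg'.continuous.comp ((continuous_update_pair j).comp (hQcont.prodMap continuous_id))
  have hρint : Integrable ρ ((mucube d).prod nu) := integrable_prodMu hρcont
  -- main identity
  have key : ∫ t, g (P t) ∂(mucube d)
      = (∫ t, g (Q t) ∂(mucube d)) + ∫ t, (∫ s, ρ (t, s) ∂nu) ∂(mucube d) := by
    rw [peel j (φ := fun t => g (P t)) (hg.continuous.comp hPcont)]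
    have inner_eq : ∀ t, ∫ s, g (P (Function.update t j s)) ∂nu
        = g (Q t) + ∫ s, ρ (t, s) ∂nu := by
      intro t
      have : ∀ s, g (P (Function.update t j s)) = g (Function.update (Q t) j s) := by
        intro s; rw [hPQ]
      simp_rw [this]
      rw [oneDim hg (Q t) j, hQ0]
    simp_rw [inner_eq]
    exact integral_add (integrable_mucube (F := fun t => g (Q t)) (hg.continuous.comp hQcont))
      (hρint.integral_prod_left)
  -- bound the two pieces
  have h1 : ‖∫ t, g (Q t) ∂(mucube d)‖ ≤ Bsup f u w :=
    le_ciSup (bddAbove_Bsup hf u w) x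
  have h2 : ‖∫ t, (∫ s, ρ (t, s) ∂nu) ∂(mucube d)‖ ≤ 2⁻¹ * Bsup f (insert j u) w := by
    have hswap : ∫ t, (∫ s, ρ (t, s) ∂nu) ∂(mucube d)
        = ∫ s, (∫ t, ρ (t, s) ∂(mucube d)) ∂nu :=
      integral_integral_swap hρint
    rw [hswap]
    have hB' : 0 ≤ Bsup f (insert j u) w := by
      have := le_ciSup (bddAbove_Bsup hf (insert j u) w) (⟨0, zero_mem_cube⟩ : cube d)
      exact (norm_nonneg _).trans this
    have hbound : ∀ s ∈ Set.Icc (0:ℝ) 1,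
        ‖∫ t, ρ (t, s) ∂(mucube d)‖ ≤ (1 - s) * Bsup f (insert j u) w := by
      intro s hs
      have : ∫ t, ρ (t, s) ∂(mucube d)
          = ((1:ℝ) - s) • ∫ t, pderiv j g (Function.update (Q t) j s) ∂(mucube d) := by
        rw [← integral_smul]
      rw [this, norm_smul, Real.norm_eq_abs, abs_of_nonneg (by linarith [hs.2])]
      refine mul_le_mul_of_nonneg_left ?_ (by linarith [hs.2])
      have hx' : Function.update x.1 j s ∈ cube d := by
        rw [mem_cube]; intro i
        rcases eq_or_ne i j with h | h
        · subst h; simpa using hs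
        · rw [Function.update_of_ne h]; exact mem_cube.1 x.2 i
      have := le_ciSup (bddAbove_Bsup hf (insert j u) w)
        (⟨Function.update x.1 j s, hx'⟩ : cube d)
      refine le_trans (le_of_eq ?_) this
      congr 1
      refine integral_congr_ae (Filter.Eventually.of_forall fun t => ?_)
      show pderiv j g (Function.update (Q t) j s)
          = mderiv (insert j u) f (combine (insert j u) (Function.update x.1 j s) (combine w t 0))
      rw [← hQup, mderiv_insert hf hju]
    calc ‖∫ s, (∫ t, ρ (t, s) ∂(mucube d)) ∂nu‖
        ≤ ∫ s, ‖∫ t, ρ (t, s) ∂(mucube d)‖ ∂nu := norm_integral_le_integral_norm _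
      _ ≤ ∫ s, (1 - s) * Bsup f (insert j u) w ∂nu := by
          refine integral_mono_ae (hρint.integral_prod_right.norm) ?_ ?_
          · exact (integrable_nu (continuous_const.sub continuous_id)).mul_const _
          · filter_upwards [ae_mem_nu] with s hs
            exact hbound s hs
      _ = 2⁻¹ * Bsup f (insert j u) w := by
          rw [integral_mul_const]
          congr 1
          have : ∫ s, ((1:ℝ) - s) ∂nu = ∫ s in (0:ℝ)..1, ((1:ℝ) - s) := by
            rw [nu, intervalIntegral.integral_of_le zero_le_one, integral_Icc_eq_integral_Ioc]
          rw [this, open intervalIntegral in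
            integral_sub intervalIntegrable_const intervalIntegrable_id]
          simp
          norm_num
  calc ‖∫ t, g (P t) ∂(mucube d)‖
      ≤ ‖∫ t, g (Q t) ∂(mucube d)‖ + ‖∫ t, (∫ s, ρ (t, s) ∂nu) ∂(mucube d)‖ := by
        rw [key]; exact norm_add_le _ _
    _ ≤ Bsup f u w + 2⁻¹ * Bsup f (insert j u) w := add_le_add h1 h2

lemma Bsup_le_sum {f : (Fin d → ℝ) → ℂ} (hf : ContDiff ℝ (⊤ : ℕ∞) f) :
    ∀ (w u : Finset (Fin d)), Disjoint u w →
      Bsup f u w ≤ ∑ v ∈ w.powerset, 2⁻¹ ^ v.card * Tsup f (u ∪ v) := by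
  intro w
  induction w using Finset.induction with
  | empty =>
    intro u _
    have hpt : ∀ x : cube d, ∀ t : Fin d → ℝ,
        combine u x.1 (combine (∅ : Finset (Fin d)) t 0) = combine u x.1 0 := by
      intro x t; funext i; simp [combine]
    have : Bsup f u ∅ ≤ Tsup f u := by
      refine ciSup_le fun x => ?_
      have : ∫ t, mderiv u f (combine u x.1 (combine (∅ : Finset (Fin d)) t 0)) ∂(mucube d)
          = mderiv u f (combine u x.1 0) := by
        simp_rw [hpt x]
        simp
      rw [this]
      exact le_ciSup (bddAbove_Tsup hf u) x
    simpa using this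
  | @insert j w hjw ih =>
    intro u hdisj
    have hju : j ∉ u := fun h => (Finset.disjoint_left.1 hdisj h (Finset.mem_insert_self j w))
    have hd1 : Disjoint u w := hdisj.mono_right (Finset.subset_insert j w)
    have hd2 : Disjoint (insert j u) w := by
      rw [Finset.disjoint_left]
      intro a ha haw
      rcases Finset.mem_insert.1 ha with h | h
      · exact hjw (h ▸ haw)
      · exact Finset.disjoint_left.1 hd1 h haw
    have hstep := step hf hju hjw
    have h1 := ih u hd1
    have h2 := ih (insert j u) hd2
    have hsum : ∑ v ∈ (insert j w).powerset, 2⁻¹ ^ v.card * Tsup f (u ∪ v)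
        = (∑ v ∈ w.powerset, 2⁻¹ ^ v.card * Tsup f (u ∪ v))
          + 2⁻¹ * ∑ v ∈ w.powerset, 2⁻¹ ^ v.card * Tsup f (insert j u ∪ v) := by
      rw [Finset.sum_powerset_insert hjw, Finset.mul_sum]
      congr 1
      refine Finset.sum_congr rfl fun v hv => ?_
      have hjv : j ∉ v := fun h => hjw (Finset.mem_powerset.1 hv h)
      have hcard : (insert j v).card = v.card + 1 := Finset.card_insert_of_notMem hjv
      have hset : u ∪ insert j v = insert j u ∪ v := by
        ext a
        simp [Finset.mem_union, Finset.mem_insert, or_comm, or_assoc, or_left_comm]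
      rw [hcard, hset, pow_succ]
      ring
    rw [hsum]
    calc Bsup f u (insert j w) ≤ Bsup f u w + 2⁻¹ * Bsup f (insert j u) w := hstep
      _ ≤ _ := add_le_add h1 (mul_le_mul_of_nonneg_left h2 (by norm_num))


/-- `‖f‖_{A,d,∞} ≤ C_{d,∞} ‖f‖_{⊤,d,∞}`. -/
theorem anova_le_anchored_inf {d : ℕ} (hd : 1 ≤ d) (γ : Finset (Fin d) → ℝ)
    (hγ : ∀ u, 0 < γ u) (f : (Fin d → ℝ) → ℂ) (hf : ContDiff ℝ (⊤ : ℕ∞) f) :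
    anovaNormInf γ f ≤ Cinf γ * anchNormInf γ f := by
  have hT0 : ∀ u, 0 ≤ Tsup f u := fun u =>
    (norm_nonneg _).trans (le_ciSup (bddAbove_Tsup hf u) (⟨0, zero_mem_cube⟩ : cube d))
  have hanch : ∀ u : Finset (Fin d), (γ u)⁻¹ * Tsup f u ≤ anchNormInf γ f := fun u =>
    le_ciSup (f := fun u0 : Finset (Fin d) =>
      (γ u0)⁻¹ * ⨆ x : cube d, ‖mderiv u0 f (combine u0 x.1 0)‖)
      (Set.Finite.bddAbove (Set.finite_range _)) u
  have hanch0 : 0 ≤ anchNormInf γ f :=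
    le_trans (mul_nonneg (inv_nonneg.2 (hγ ∅).le) (hT0 ∅)) (hanch ∅)
  have hTle : ∀ u : Finset (Fin d), Tsup f u ≤ γ u * anchNormInf γ f := by
    intro u
    have := mul_le_mul_of_nonneg_left (hanch u) (hγ u).le
    rwa [← mul_assoc, mul_inv_cancel₀ (hγ u).ne', one_mul] at this
  refine ciSup_le fun u => ?_
  -- identify the inner sup with Bsup f u uᶜ
  have hpt : ∀ x : cube d, ∀ t : Fin d → ℝ,
      combine u x.1 (combine uᶜ t 0) = combine u x.1 t := by
    intro x t; funext i
    by_cases h : i ∈ u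
    · simp [combine, h]
    · simp [combine, h, Finset.mem_compl]
  have hinner : (⨆ x : cube d, ‖∫ t in cube d, mderiv u f (combine u x.1 t)‖)
      = Bsup f u uᶜ := by
    rw [Bsup]
    congr 1
    funext x
    rw [← mucube_eq]
    congr 1
    refine integral_congr_ae (Filter.Eventually.of_forall fun t => ?_)
    exact congrArg (mderiv u f) (hpt x t).symm
  rw [hinner]
  have hB := Bsup_le_sum hf uᶜ u disjoint_compl_right
  calc (γ u)⁻¹ * Bsup f u uᶜ
      ≤ (γ u)⁻¹ * ∑ v ∈ uᶜ.powerset, 2⁻¹ ^ v.card * Tsup f (u ∪ v) :=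
        mul_le_mul_of_nonneg_left hB (inv_nonneg.2 (hγ u).le)
    _ ≤ (γ u)⁻¹ * ∑ v ∈ uᶜ.powerset, 2⁻¹ ^ v.card * (γ (u ∪ v) * anchNormInf γ f) := by
        refine mul_le_mul_of_nonneg_left ?_ (inv_nonneg.2 (hγ u).le)
        refine Finset.sum_le_sum fun v _ => ?_
        exact mul_le_mul_of_nonneg_left (hTle (u ∪ v)) (by positivity)
    _ = (∑ v ∈ uᶜ.powerset, (2:ℝ)⁻¹ ^ v.card * (γ (u ∪ v) / γ u)) * anchNormInf γ f := by
        rw [Finset.mul_sum, Finset.sum_mul]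
        refine Finset.sum_congr rfl fun v _ => ?_
        field_simp
    _ ≤ Cinf γ * anchNormInf γ f := by
        refine mul_le_mul_of_nonneg_right ?_ hanch0
        exact le_ciSup (f := fun u0 : Finset (Fin d) =>
          ∑ v ∈ u0ᶜ.powerset, (2:ℝ)⁻¹ ^ v.card * (γ (u0 ∪ v) / γ u0))
          (Set.Finite.bddAbove (Set.finite_range _)) u
end

section
/- Let 1 ≤ p < ∞ and let (γ_j)_{j∈ℕ} be strictly positive, and consider the product weights γ_u = ∏_{j∈u} γ_j. If there exists a constant c > 0 such that for every d ≥ 1 and every C^∞ function f : ℝ^d → ℂ one has ‖f‖_{A,d,p} ≤ c ‖f‖_{⊤,d,p}, then ∑_{j=1}^∞ γ_j < ∞. -/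
open MeasureTheory

/-- `‖f‖_{⊤,d,p}^p`: the `p`-th power of the anchored norm. Since the integrand depends only
on the coordinates in `u` and the cube carries a probability measure, the integral over
`[0,1]^u` is written as an integral over the whole cube. -/
noncomputable def anchP {d : ℕ} (γ : Finset (Fin d) → ℝ) (p : ℝ) (f : (Fin d → ℝ) → ℂ) : ℝ :=
  ∑ u : Finset (Fin d), γ u ^ (-p) * ∫ x in cube d, ‖mderiv u f (combine u x 0)‖ ^ p

/-- `‖f‖_{A,d,p}^p`: the `p`-th power of the ANOVA norm. -/
noncomputable def anovaP {d : ℕ} (γ : Finset (Fin d) → ℝ) (p : ℝ) (f : (Fin d → ℝ) → ℂ) : ℝ :=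
  ∑ u : Finset (Fin d), γ u ^ (-p) *
    ∫ x in cube d, ‖∫ t in cube d, mderiv u f (combine u x t)‖ ^ p

/-- The anchored norm `‖f‖_{⊤,d,p}`. -/
noncomputable def anchNorm {d : ℕ} (γ : Finset (Fin d) → ℝ) (p : ℝ) (f : (Fin d → ℝ) → ℂ) : ℝ :=
  anchP γ p f ^ (1 / p)

/-- The ANOVA norm `‖f‖_{A,d,p}`. -/
noncomputable def anovaNorm {d : ℕ} (γ : Finset (Fin d) → ℝ) (p : ℝ) (f : (Fin d → ℝ) → ℂ) : ℝ :=
  anovaP γ p f ^ (1 / p)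

/-- Product weights `γ_u = ∏_{j∈u} γ_j` built from a sequence `γ : ℕ → ℝ`. -/
noncomputable def prodWeight (γ : ℕ → ℝ) {d : ℕ} (u : Finset (Fin d)) : ℝ :=
  ∏ j ∈ u, γ (j : ℕ)

noncomputable def testF (γ : ℕ → ℝ) (d : ℕ) (s : Finset (Fin d)) : (Fin d → ℝ) → ℂ :=
  fun x => ∏ j ∈ s, (1 + (γ j : ℂ) * x j)

lemma hasFDerivAt_factor (γ : ℕ → ℝ) {d : ℕ} (j : Fin d) (x : Fin d → ℝ) :
    HasFDerivAt (fun x : Fin d → ℝ => (1 : ℂ) + (γ j : ℂ) * x j)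
      ((ContinuousLinearMap.proj j : (Fin d → ℝ) →L[ℝ] ℝ).smulRight ((γ (j : ℕ) : ℂ))) x := by
  have h1 : HasFDerivAt (fun x : Fin d → ℝ => x j)
      (ContinuousLinearMap.proj j : (Fin d → ℝ) →L[ℝ] ℝ) x :=
    by exact (ContinuousLinearMap.proj j : (Fin d → ℝ) →L[ℝ] ℝ).hasFDerivAt
  have h2 := (h1.smul_const ((γ (j : ℕ) : ℂ))).const_add 1
  simpa [Complex.real_smul, mul_comm] using h2

lemma testF_contDiff (γ : ℕ → ℝ) (d : ℕ) (s : Finset (Fin d)) :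
    ContDiff ℝ (⊤ : ℕ∞) (testF γ d s) := by
  unfold testF
  apply contDiff_prod
  intro i _
  apply contDiff_const.add
  exact contDiff_const.mul (Complex.ofRealCLM.contDiff.comp (ContinuousLinearMap.proj i : (Fin d → ℝ) →L[ℝ] ℝ).contDiff)

lemma pderiv_mul_testF (γ : ℕ → ℝ) {d : ℕ} (k : Fin d) (C : ℂ) (s : Finset (Fin d)) :
    pderiv k (fun x => C * testF γ d s x)
      = fun x => (if k ∈ s then (γ (k : ℕ) : ℂ) * C else 0) * testF γ d (s.erase k) x := by
  funext x
  classical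
  have hd : HasFDerivAt (fun x => C * testF γ d s x)
      (C • ∑ i ∈ s, (∏ j ∈ s.erase i, (1 + (γ j : ℂ) * x j)) •
        ((ContinuousLinearMap.proj i : (Fin d → ℝ) →L[ℝ] ℝ).smulRight ((γ (i : ℕ) : ℂ)))) x := by
    have := (HasFDerivAt.finset_prod (u := s)
      (g := fun j (x : Fin d → ℝ) => (1 : ℂ) + (γ j : ℂ) * x j)
      (g' := fun j => (ContinuousLinearMap.proj j : (Fin d → ℝ) →L[ℝ] ℝ).smulRight ((γ (j : ℕ) : ℂ)))
      (fun i _ => hasFDerivAt_factor γ i x))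
    exact this.const_mul C
  rw [pderiv, hd.fderiv]
  simp only [ContinuousLinearMap.smul_apply, ContinuousLinearMap.sum_apply,
    ContinuousLinearMap.smul_apply, ContinuousLinearMap.smulRight_apply,
    ContinuousLinearMap.proj_apply]
  by_cases hk : k ∈ s
  · rw [Finset.sum_eq_single_of_mem k hk (fun b _ hbk => by simp [Pi.single_apply, hbk])]
    simp only [hk, if_true, testF, Pi.single_eq_same, one_smul, smul_eq_mul]
    ring
  · rw [Finset.sum_eq_zero (fun b hb => by
      have hbk : b ≠ k := fun hh => hk (hh ▸ hb)
      simp [Pi.single_apply, hbk])]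
    simp [hk]

lemma foldr_pderiv (γ : ℕ → ℝ) {d : ℕ} :
    ∀ (l : List (Fin d)) (C : ℂ) (s : Finset (Fin d)), l.Nodup → (∀ j ∈ l, j ∈ s) →
      l.foldr pderiv (fun x => C * testF γ d s x)
        = fun x => ((∏ j ∈ l.toFinset, (γ (j : ℕ) : ℂ)) * C) * testF γ d (s \ l.toFinset) x := by
  intro l
  induction l with
  | nil => intro C s _ _; simp
  | cons a l ih =>
    intro C s hnd hmem
    have hal : a ∉ l := (List.nodup_cons.mp hnd).1
    have hln : l.Nodup := (List.nodup_cons.mp hnd).2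
    rw [List.foldr_cons, ih C s hln (fun j hj => hmem j (List.mem_cons_of_mem a hj))]
    rw [pderiv_mul_testF]
    have ha : a ∈ s \ l.toFinset := by
      simp [Finset.mem_sdiff, hmem a List.mem_cons_self, List.mem_toFinset, hal]
    funext x
    rw [if_pos ha]
    have htf : (a :: l).toFinset = insert a l.toFinset := by simp
    have hprod : ∏ j ∈ (a :: l).toFinset, (γ (j : ℕ) : ℂ)
        = (γ (a : ℕ) : ℂ) * ∏ j ∈ l.toFinset, (γ (j : ℕ) : ℂ) := by
      rw [htf, Finset.prod_insert (by simpa [List.mem_toFinset] using hal)]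
    have hset : (s \ l.toFinset).erase a = s \ (a :: l).toFinset := by
      rw [htf]
      ext b
      simp [Finset.mem_erase, Finset.mem_sdiff, Finset.mem_insert]
      tauto
    rw [hset, hprod]
    ring_nf

lemma mderiv_testF (γ : ℕ → ℝ) {d : ℕ} (u : Finset (Fin d)) :
    mderiv u (testF γ d Finset.univ)
      = fun x => (∏ j ∈ u, (γ (j : ℕ) : ℂ)) * testF γ d uᶜ x := by
  have h := foldr_pderiv γ u.toList 1 Finset.univ u.nodup_toList (fun j _ => Finset.mem_univ j)
  have h0 : (fun x => (1 : ℂ) * testF γ d Finset.univ x) = testF γ d Finset.univ := by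
    funext x; rw [one_mul]
  rw [mderiv, ← h0, h]
  simp [Finset.toList_toFinset, Finset.compl_eq_univ_sdiff]

lemma measurableSet_cube (d : ℕ) : MeasurableSet (cube d) :=
  MeasurableSet.univ_pi fun _ => measurableSet_Icc

lemma volume_cube (d : ℕ) : volume (cube d) = 1 := by
  rw [cube, volume_pi_pi]
  simp [Real.volume_Icc]

lemma integral_cube_prod {d : ℕ} (f : Fin d → ℝ → ℂ) :
    ∫ t in cube d, ∏ j, f j (t j) = ∏ j, ∫ s in Set.Icc (0:ℝ) 1, f j s := by
  rw [← integral_indicator (measurableSet_cube d)]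
  have key : (Set.indicator (cube d) fun t => ∏ j, f j (t j))
      = fun t => ∏ j, (Set.indicator (Set.Icc (0:ℝ) 1) (f j)) (t j) := by
    funext t
    by_cases ht : t ∈ cube d
    · rw [Set.indicator_of_mem ht]
      refine Finset.prod_congr rfl fun j _ => ?_
      rw [Set.indicator_of_mem ((Set.mem_univ_pi.mp ht) j)]
    · rw [Set.indicator_of_notMem ht]
      obtain ⟨j, hj⟩ := not_forall.mp (fun hh => ht (Set.mem_univ_pi.mpr hh))
      exact (Finset.prod_eq_zero (Finset.mem_univ j) (Set.indicator_of_notMem hj _)).symm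
  rw [key]
  have := MeasureTheory.integral_fintype_prod_eq_prod (𝕜 := ℂ) (ι := Fin d) (μ := fun _ => volume)
    (fun j => Set.indicator (Set.Icc (0:ℝ) 1) (f j))
  refine this.trans ?_
  refine Finset.prod_congr rfl fun j _ => ?_
  rw [integral_indicator measurableSet_Icc]

lemma integral_Icc_affine (a : ℝ) :
    ∫ s in Set.Icc (0:ℝ) 1, ((1 : ℂ) + (a : ℂ) * s) = ((1 + a/2 : ℝ) : ℂ) := by
  have hreal : (∫ s in Set.Icc (0:ℝ) 1, (1 + a * s)) = 1 + a/2 := by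
    rw [MeasureTheory.integral_Icc_eq_integral_Ioc,
      ← intervalIntegral.integral_of_le (zero_le_one (α := ℝ)),
      intervalIntegral.integral_add intervalIntegrable_const
        (intervalIntegral.intervalIntegrable_id.const_mul a),
      intervalIntegral.integral_const_mul, integral_id]
    norm_num
    ring
  have h1 : ∀ s : ℝ, (1 : ℂ) + (a:ℂ)*s = ((1 + a*s : ℝ) : ℂ) := by intro s; push_cast; ring
  simp_rw [h1]
  have h2 := integral_ofReal (𝕜 := ℂ) (f := fun s : ℝ => 1 + a * s)
    (μ := volume.restrict (Set.Icc 0 1))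
  exact h2.trans (by rw [hreal]; norm_cast)

lemma anchP_testF (γ : ℕ → ℝ) (hγ : ∀ j, 0 < γ j) (p : ℝ) {d : ℕ} :
    anchP (prodWeight γ) p (testF γ d Finset.univ) = 2 ^ d := by
  have hterm : ∀ u : Finset (Fin d),
      (prodWeight γ u) ^ (-p) *
        (∫ x in cube d, ‖mderiv u (testF γ d Finset.univ) (combine u x 0)‖ ^ p) = 1 := by
    intro u
    have hG : (0 : ℝ) < ∏ j ∈ u, γ (j : ℕ) := Finset.prod_pos fun j _ => hγ j
    have hm : ∀ x : Fin d → ℝ, mderiv u (testF γ d Finset.univ) (combine u x 0)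
        = ((∏ j ∈ u, γ (j : ℕ) : ℝ) : ℂ) := by
      intro x
      simp only [mderiv_testF]
      have h1 : testF γ d uᶜ (combine u x 0) = 1 := by
        refine Finset.prod_eq_one fun j hj => ?_
        have hju : j ∉ u := Finset.mem_compl.mp hj
        simp [combine, hju]
      rw [h1, mul_one]
      push_cast
      rfl
    simp_rw [hm]
    have hn : ‖((∏ j ∈ u, γ (j : ℕ) : ℝ) : ℂ)‖ = ∏ j ∈ u, γ (j : ℕ) := by
      rw [Complex.norm_real, Real.norm_eq_abs, abs_of_pos hG]
    rw [hn, integral_const, measureReal_restrict_apply_univ, measureReal_def, volume_cube]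
    simp only [ENNReal.toReal_one, smul_eq_mul, one_mul]
    rw [prodWeight, Real.rpow_neg hG.le]
    exact inv_mul_cancel₀ (Real.rpow_pos_of_pos hG p).ne'
  rw [anchP, Finset.sum_congr rfl fun u _ => hterm u, Finset.sum_const]
  simp [Fintype.card_finset]

lemma anovaP_testF (γ : ℕ → ℝ) (hγ : ∀ j, 0 < γ j) (p : ℝ) {d : ℕ} :
    anovaP (prodWeight γ) p (testF γ d Finset.univ)
      = ∑ u : Finset (Fin d), (∏ j ∈ uᶜ, (1 + γ (j : ℕ) / 2)) ^ p := by
  rw [anovaP]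
  refine Finset.sum_congr rfl fun u _ => ?_
  have hG : (0 : ℝ) < ∏ j ∈ u, γ (j : ℕ) := Finset.prod_pos fun j _ => hγ j
  have hP : (0 : ℝ) < ∏ j ∈ uᶜ, (1 + γ (j : ℕ) / 2) :=
    Finset.prod_pos fun j _ => by have := hγ (j : ℕ); linarith
  have hin : ∀ x : Fin d → ℝ,
      (∫ t in cube d, mderiv u (testF γ d Finset.univ) (combine u x t))
        = (((∏ j ∈ u, γ (j : ℕ)) * ∏ j ∈ uᶜ, (1 + γ (j : ℕ) / 2) : ℝ) : ℂ) := by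
    intro x
    simp only [mderiv_testF]
    rw [MeasureTheory.integral_const_mul]
    set h : Fin d → ℝ → ℂ := fun j s => if j ∈ u then 1 else 1 + (γ (j : ℕ) : ℂ) * s with hh
    have heq : ∀ t : Fin d → ℝ, testF γ d uᶜ (combine u x t) = ∏ j, h j (t j) := by
      intro t
      rw [← Finset.prod_mul_prod_compl u (fun j => h j (t j))]
      have h1 : ∏ j ∈ u, h j (t j) = 1 :=
        Finset.prod_eq_one fun j hj => by simp [hh, hj]
      rw [h1, one_mul, testF]
      refine Finset.prod_congr rfl fun j hj => ?_
      have hju : j ∉ u := Finset.mem_compl.mp hj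
      simp [hh, hju, combine]
    simp_rw [heq]
    rw [integral_cube_prod h]
    rw [← Finset.prod_mul_prod_compl u (fun j => ∫ s in Set.Icc (0:ℝ) 1, h j s)]
    have h2 : ∏ j ∈ u, (∫ s in Set.Icc (0:ℝ) 1, h j s) = 1 := by
      refine Finset.prod_eq_one fun j hj => ?_
      simp only [hh, hj, if_true]
      rw [integral_const, measureReal_restrict_apply_univ, measureReal_def, Real.volume_Icc]
      norm_num
    have h3 : ∏ j ∈ uᶜ, (∫ s in Set.Icc (0:ℝ) 1, h j s)
        = ((∏ j ∈ uᶜ, (1 + γ (j : ℕ) / 2) : ℝ) : ℂ) := by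
      push_cast
      refine Finset.prod_congr rfl fun j hj => ?_
      have hju : j ∉ u := Finset.mem_compl.mp hj
      simp only [hh, hju, if_false]
      rw [integral_Icc_affine]
      push_cast
      ring
    rw [h2, one_mul, h3]
    push_cast
    ring
  simp_rw [hin]
  have hnorm : ‖(((∏ j ∈ u, γ (j : ℕ)) * ∏ j ∈ uᶜ, (1 + γ (j : ℕ) / 2) : ℝ) : ℂ)‖
      = (∏ j ∈ u, γ (j : ℕ)) * ∏ j ∈ uᶜ, (1 + γ (j : ℕ) / 2) := by
    rw [Complex.norm_real, Real.norm_eq_abs, abs_of_pos (mul_pos hG hP)]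
  rw [hnorm, integral_const, measureReal_restrict_apply_univ, measureReal_def, volume_cube]
  simp only [ENNReal.toReal_one, one_smul]
  rw [Real.mul_rpow hG.le hP.le, prodWeight, Real.rpow_neg hG.le]
  rw [← mul_assoc, inv_mul_cancel₀ (Real.rpow_pos_of_pos hG p).ne', one_mul]

lemma one_add_sum_le_prod (x : ℕ → ℝ) (hx : ∀ j, 0 ≤ x j) (n : ℕ) :
    1 + ∑ j ∈ Finset.range n, x j ≤ ∏ j ∈ Finset.range n, (1 + x j) := by
  induction n with
  | zero => simp
  | succ n ih =>
    rw [Finset.sum_range_succ, Finset.prod_range_succ]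
    have h1 : (1 : ℝ) ≤ 1 + ∑ j ∈ Finset.range n, x j := by
      have : 0 ≤ ∑ j ∈ Finset.range n, x j := Finset.sum_nonneg fun j _ => hx j
      linarith
    nlinarith [hx n, ih]

/-- if the ANOVA norm is uniformly dominated by the anchored norm for product
weights, then the weight sequence is summable. -/
theorem summable_of_uniform_bound (p : ℝ) (hp : 1 ≤ p) (γ : ℕ → ℝ) (hγ : ∀ j, 0 < γ j)
    (c : ℝ) (hc : 0 < c)
    (h : ∀ d : ℕ, 1 ≤ d → ∀ f : (Fin d → ℝ) → ℂ, ContDiff ℝ (⊤ : ℕ∞) f →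
      anovaNorm (prodWeight γ) p f ≤ c * anchNorm (prodWeight γ) p f) :
    Summable γ := by
  have hp0 : (0 : ℝ) < p := lt_of_lt_of_le one_pos hp
  have key : ∀ d : ℕ, 1 ≤ d → ∏ j ∈ Finset.range d, (1 + γ j / 4) ≤ c ^ p := by
    intro d hd
    have hb := h d hd (testF γ d Finset.univ) (testF_contDiff γ d Finset.univ)
    rw [anovaNorm, anchNorm, anchP_testF γ hγ p, anovaP_testF γ hγ p] at hb
    set S : ℝ := ∑ u : Finset (Fin d), (∏ j ∈ uᶜ, (1 + γ (j : ℕ) / 2)) ^ p with hS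
    have hSnn : 0 ≤ S :=
      Finset.sum_nonneg fun u _ => Real.rpow_nonneg
        (Finset.prod_nonneg fun j _ => by have := hγ (j : ℕ); linarith) p
    have h2d : (0 : ℝ) ≤ (2 : ℝ) ^ d := by positivity
    -- raise hb to the power p
    have hup : S ≤ c ^ p * 2 ^ d := by
      have h1 := Real.rpow_le_rpow (Real.rpow_nonneg hSnn _) hb hp0.le
      rw [← Real.rpow_natCast (2 : ℝ) d] at h1
      rw [← Real.rpow_mul hSnn, one_div_mul_cancel hp0.ne', Real.rpow_one] at h1
      rw [Real.mul_rpow hc.le (Real.rpow_nonneg (by positivity) _)] at h1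
      rw [← Real.rpow_mul (by positivity : (0:ℝ) ≤ (2:ℝ) ^ (d:ℝ)),
        one_div_mul_cancel hp0.ne', Real.rpow_one, Real.rpow_natCast] at h1
      exact h1
    -- lower bound for S
    have hlow : ∏ j : Fin d, (2 + γ (j : ℕ) / 2) ≤ S := by
      have hprod : ∏ j : Fin d, (2 + γ (j : ℕ) / 2)
          = ∑ u : Finset (Fin d), ∏ j ∈ uᶜ, (1 + γ (j : ℕ) / 2) := by
        have h0 := Finset.prod_add (fun _ : Fin d => (1 : ℝ))
          (fun j : Fin d => 1 + γ (j : ℕ) / 2) Finset.univ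
        simp only [Finset.prod_const_one, one_mul, Finset.powerset_univ] at h0
        calc ∏ j : Fin d, (2 + γ (j : ℕ) / 2)
            = ∏ j : Fin d, (1 + (1 + γ (j : ℕ) / 2)) :=
              Finset.prod_congr rfl fun j _ => by ring
          _ = ∑ u : Finset (Fin d), ∏ j ∈ Finset.univ \ u, (1 + γ (j : ℕ) / 2) := h0
          _ = ∑ u : Finset (Fin d), ∏ j ∈ uᶜ, (1 + γ (j : ℕ) / 2) :=
              Finset.sum_congr rfl fun u _ => by rw [Finset.compl_eq_univ_sdiff]
      rw [hprod]
      refine Finset.sum_le_sum fun u _ => ?_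
      have hge : ∀ j ∈ uᶜ, (1 : ℝ) ≤ 1 + γ (j : ℕ) / 2 := fun j _ => by
        have := hγ (j : ℕ); linarith
      have hP1 : (1 : ℝ) ≤ ∏ j ∈ uᶜ, (1 + γ (j : ℕ) / 2) := by
        have := Finset.prod_le_prod (s := uᶜ) (f := fun _ : Fin d => (1 : ℝ))
          (g := fun j : Fin d => 1 + γ (j : ℕ) / 2) (fun _ _ => zero_le_one) hge
        simpa using this
      calc ∏ j ∈ uᶜ, (1 + γ (j : ℕ) / 2)
          = (∏ j ∈ uᶜ, (1 + γ (j : ℕ) / 2)) ^ (1 : ℝ) := (Real.rpow_one _).symm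
        _ ≤ (∏ j ∈ uᶜ, (1 + γ (j : ℕ) / 2)) ^ p :=
            Real.rpow_le_rpow_of_exponent_le hP1 hp
    have hsplit : ∏ j : Fin d, (2 + γ (j : ℕ) / 2)
        = 2 ^ d * ∏ j : Fin d, (1 + γ (j : ℕ) / 4) := by
      calc ∏ j : Fin d, (2 + γ (j : ℕ) / 2)
          = ∏ j : Fin d, (2 * (1 + γ (j : ℕ) / 4)) :=
            Finset.prod_congr rfl fun j _ => by ring
        _ = (∏ _j : Fin d, (2 : ℝ)) * ∏ j : Fin d, (1 + γ (j : ℕ) / 4) :=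
            Finset.prod_mul_distrib
        _ = 2 ^ d * ∏ j : Fin d, (1 + γ (j : ℕ) / 4) := by
            rw [Finset.prod_const, Finset.card_univ, Fintype.card_fin]
    have hfin : 2 ^ d * ∏ j : Fin d, (1 + γ (j : ℕ) / 4) ≤ c ^ p * 2 ^ d := by
      rw [← hsplit]; exact hlow.trans hup
    have h2pos : (0 : ℝ) < 2 ^ d := by positivity
    have : ∏ j : Fin d, (1 + γ (j : ℕ) / 4) ≤ c ^ p := by
      rw [mul_comm (c ^ p) ((2 : ℝ) ^ d)] at hfin
      exact le_of_mul_le_mul_left hfin h2pos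
    rwa [Fin.prod_univ_eq_prod_range (fun j => 1 + γ j / 4) d] at this
  have hcp : 0 ≤ c ^ p := Real.rpow_nonneg hc.le p
  have hsum : ∀ n : ℕ, ∑ j ∈ Finset.range n, γ j / 4 ≤ c ^ p := by
    intro n
    rcases Nat.eq_zero_or_pos n with hn | hn
    · simp [hn, hcp]
    · have h1 := one_add_sum_le_prod (fun j => γ j / 4) (fun j => by have := hγ j; linarith) n
      have h2 := key n hn
      linarith
  have hs : Summable fun j => γ j / 4 :=
    summable_of_sum_range_le (fun n => by have := hγ n; linarith) hsum
  exact (hs.mul_left 4).congr fun j => by ring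
end
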